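/- arXiv:2406.18163 — 4 statements merged into one kernel-verified Lean document; each statement's English description precedes it below -/
import Mathlib

section
/- Let N ≥ 3, let θ : Fin N → ℝ be a cyclic sequence of angles with 0 < θ i < 2π for all i, let ℓ : Fin N → ℝ satisfy ℓ i > 0 for all i, let Per := ∑ i, ℓ i, and let A > 0 be a real number. If for every i (indices taken cyclically mod N) one has ψ(θ i) = ψ(θ (i+1)) and (1/ℓ i) · (ψ(θ i) + ψ(θ (i+1))) = Per/(2·A), then the sequence ℓ is constant and the sequence θ is constant (i.e., ℓ i = ℓ j and θ i = θ j for all i, j). -/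
/-!
By the double-angle formulas `ψ(θ) = tan (π/2 - θ/2)`, which is injective on `(0, 2π)`. The tilting
condition makes `ψ ∘ θ` constant around the cycle, hence `θ` constant; the sliding condition then
reads `2 ψ(θ₀) / ℓ i = Per / (2A)` with a nonzero right-hand side, so every `ℓ i` is the same.
-/

/-- `ψ(θ) = 1/sin θ + cos θ/sin θ` (equals `cot(θ/2)` on `(0, 2π)`). -/
noncomputable def psi (θ : ℝ) : ℝ := 1 / Real.sin θ + Real.cos θ / Real.sin θ

open Real Set

theorem Fin.apply_eq_apply_zero_of_apply_add_one_eq {α : Type*} {n : ℕ} [NeZero n]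
    {f : Fin n → α} (h : ∀ i, f (i + 1) = f i) (i : Fin n) : f i = f 0 := by
  obtain ⟨m, rfl⟩ := Nat.exists_eq_succ_of_ne_zero (NeZero.ne n)
  induction i using Fin.induction with
  | zero => rfl
  | succ i ih => rw [← Fin.coeSucc_eq_succ, h, ih]

/-- Unlike `cot (θ / 2)`, this identity holds for every real `θ`, junk values included. -/
theorem psi_eq_tan (t : ℝ) : psi t = tan (π / 2 - t / 2) := by
  have hsin : sin t = 2 * cos (t / 2) * sin (t / 2) := by
    conv_lhs => rw [← mul_div_cancel₀ t two_ne_zero, sin_two_mul]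
    ring
  have hcos : 1 + cos t = 2 * cos (t / 2) * cos (t / 2) := by
    conv_lhs => rw [← mul_div_cancel₀ t two_ne_zero, cos_two_mul]
    ring
  rw [psi, ← add_div, hsin, hcos, tan_eq_sin_div_cos, sin_pi_div_two_sub, cos_pi_div_two_sub]
  rcases eq_or_ne (cos (t / 2)) 0 with hc | hc
  · simp [hc]
  · exact mul_div_mul_left _ _ (mul_ne_zero two_ne_zero hc)

theorem psi_injOn : InjOn psi (Ioo 0 (2 * π)) := by
  intro a ⟨ha0, ha2⟩ b ⟨hb0, hb2⟩ h
  rw [psi_eq_tan, psi_eq_tan] at h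
  have := injOn_tan ⟨by linarith, by linarith⟩ ⟨by linarith, by linarith⟩ h
  linarith

theorem apply_eq_apply_of_one_div_mul_eq {ι : Type*} {ℓ : ι → ℝ} {s R : ℝ} (hR : R ≠ 0)
    (hℓ : ∀ i, ℓ i ≠ 0) (h : ∀ i, 1 / ℓ i * s = R) (i j : ι) : ℓ i = ℓ j := by
  have key : ∀ i, ℓ i = s / R := fun i => by
    rw [eq_div_iff hR, ← h i]
    field_simp [hℓ i]
  rw [key i, key j]

theorem alexandrov_polygon_sliding_tilting_abstract_general
    (N : ℕ) [NeZero N]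
    (θ ℓ : Fin N → ℝ)
    (hθ : ∀ i, 0 < θ i ∧ θ i < 2 * Real.pi)
    (hℓ : ∀ i, 0 < ℓ i)
    (A : ℝ) (hA : 0 < A)
    (Per : ℝ) (hPer : Per = ∑ i, ℓ i)
    (htilt : ∀ i : Fin N, psi (θ i) = psi (θ (i + 1)))
    (hslide : ∀ i : Fin N, (1 / ℓ i) * (psi (θ i) + psi (θ (i + 1))) = Per / (2 * A)) :
    (∀ i j, ℓ i = ℓ j) ∧ (∀ i j, θ i = θ j) := by
  have hψ : ∀ i, psi (θ i) = psi (θ 0) :=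
    Fin.apply_eq_apply_zero_of_apply_add_one_eq (f := psi ∘ θ) fun i => (htilt i).symm
  have hPer_pos : 0 < Per := hPer ▸ Finset.sum_pos (fun i _ => hℓ i) Finset.univ_nonempty
  have hslide₀ : ∀ i, 1 / ℓ i * (psi (θ 0) + psi (θ 0)) = Per / (2 * A) := fun i => by
    simpa only [hψ i, hψ (i + 1)] using hslide i
  exact ⟨apply_eq_apply_of_one_div_mul_eq (by positivity) (fun i => (hℓ i).ne') hslide₀,
    fun i j => psi_injOn (hθ i) (hθ j) ((hψ i).trans (hψ j).symm)⟩

/-- Alexandrov's theorem for polygons (sliding & tilting stationarity conditions),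
abstract form: the side lengths and interior angles are constant, i.e. the
polygon is regular. -/
theorem alexandrov_polygon_sliding_tilting_abstract
    (N : ℕ) (hN : 3 ≤ N) [NeZero N]
    (θ ℓ : Fin N → ℝ)
    (hθ : ∀ i, 0 < θ i ∧ θ i < 2 * Real.pi)
    (hℓ : ∀ i, 0 < ℓ i)
    (A : ℝ) (hA : 0 < A)
    (Per : ℝ) (hPer : Per = ∑ i, ℓ i)
    (htilt : ∀ i : Fin N, psi (θ i) = psi (θ (i + 1)))
    (hslide : ∀ i : Fin N, (1 / ℓ i) * (psi (θ i) + psi (θ (i + 1))) = Per / (2 * A)) :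
    (∀ i j, ℓ i = ℓ j) ∧ (∀ i j, θ i = θ j) :=
  alexandrov_polygon_sliding_tilting_abstract_general N θ ℓ hθ hℓ A hA Per hPer htilt hslide
end

section
/- Let N ≥ 3 and let P : Fin N → ℝ² (indices cyclic mod N) be such that for every i the three points P (i−1), P i, P (i+1) are affinely independent. Set θ i := ∠(P (i−1), P i, P (i+1)) (the unsigned Euclidean angle at P i). Assume that for every i one has ψ(θ i) = ψ(θ (i+1)) and ∠(P i, P (i−1), P (i+1)) = ∠(P i, P (i+1), P (i−1)). Then dist(P i, P (i+1)) = dist(P j, P (j+1)) and θ i = θ j for all i, j. -/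
open EuclideanGeometry Real

/-- Where `sin x = 0` both sides take the junk value `0`. -/
theorem psi_eq_inv_tan_half (x : ℝ) : psi x = (tan (x / 2))⁻¹ := by
  have hsin : sin x = 2 * sin (x / 2) * cos (x / 2) := by
    rw [← sin_two_mul, mul_div_cancel₀ x two_ne_zero]
  have hcos : cos x = 2 * cos (x / 2) ^ 2 - 1 := by
    rw [← cos_two_mul, mul_div_cancel₀ x two_ne_zero]
  rw [psi, ← add_div, hsin, hcos, tan_eq_sin_div_cos, inv_div]
  rcases eq_or_ne (sin (x / 2)) 0 with hs | hs
  · simp [hs]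
  rcases eq_or_ne (cos (x / 2)) 0 with hc | hc
  · simp [hc]
  field_simp
  ring

theorem psi_injOn_s2 : Set.InjOn psi (Set.Ioo 0 π) := by
  intro x ⟨hx0, hxπ⟩ y ⟨hy0, hyπ⟩ h
  rw [psi_eq_inv_tan_half, psi_eq_inv_tan_half, inv_inj] at h
  have := injOn_tan ⟨by linarith, by linarith⟩ ⟨by linarith, by linarith⟩ h
  linarith

open scoped Fin.NatCast in
theorem Fin.apply_eq_apply_of_forall_apply_add_one {α : Type*} {N : ℕ} [NeZero N]
    {f : Fin N → α} (h : ∀ i, f (i + 1) = f i) (i j : Fin N) : f i = f j := by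
  have hf0 : ∀ n : ℕ, f n = f 0 := by
    intro n
    induction n with
    | zero => simp
    | succ n ih => rw [Nat.cast_succ, h, ih]
  rw [← Fin.cast_val_eq_self i, ← Fin.cast_val_eq_self j, hf0, hf0]

theorem EuclideanGeometry.angle_mem_Ioo_of_affineIndependent {V P : Type*}
    [NormedAddCommGroup V] [InnerProductSpace ℝ V] [MetricSpace P] [NormedAddTorsor V P]
    {p₁ p₂ p₃ : P} (h : AffineIndependent ℝ ![p₁, p₂, p₃]) : ∠ p₁ p₂ p₃ ∈ Set.Ioo 0 π := by
  rw [affineIndependent_iff_not_collinear_set] at h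
  exact ⟨angle_pos_of_not_collinear h, angle_lt_pi_of_not_collinear h⟩

theorem alexandrov_polygon_tilting_moving_general
    (N : ℕ) [NeZero N]
    (P : Fin N → EuclideanSpace ℝ (Fin 2))
    (hindep : ∀ i : Fin N, AffineIndependent ℝ ![P (i - 1), P i, P (i + 1)])
    (θ : Fin N → ℝ)
    (hθ : ∀ i : Fin N, θ i = ∠ (P (i - 1)) (P i) (P (i + 1)))
    (htilt : ∀ i : Fin N, psi (θ i) = psi (θ (i + 1)))
    (hmove : ∀ i : Fin N, ∠ (P i) (P (i - 1)) (P (i + 1)) = ∠ (P i) (P (i + 1)) (P (i - 1))) :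
    (∀ i j, dist (P i) (P (i + 1)) = dist (P j) (P (j + 1))) ∧ (∀ i j, θ i = θ j) := by
  have hθ_mem (i : Fin N) : θ i ∈ Set.Ioo 0 π :=
    hθ i ▸ angle_mem_Ioo_of_affineIndependent (hindep i)
  constructor
  · refine Fin.apply_eq_apply_of_forall_apply_add_one fun i => ?_
    have hisosceles := dist_eq_of_angle_eq_angle_of_angle_ne_pi (hmove (i + 1))
      (hθ (i + 1) ▸ (hθ_mem (i + 1)).2.ne)
    rwa [add_sub_cancel_right, dist_comm, eq_comm] at hisosceles
  · exact Fin.apply_eq_apply_of_forall_apply_add_one fun i =>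
      (psi_injOn_s2 (hθ_mem i) (hθ_mem (i + 1)) (htilt i)).symm

/-- Alexandrov's theorem for polygons (tilting & vertex-moving stationarity
conditions): such a polygon is equilateral and equiangular, i.e. regular. -/
theorem alexandrov_polygon_tilting_moving
    (N : ℕ) (hN : 3 ≤ N) [NeZero N]
    (P : Fin N → EuclideanSpace ℝ (Fin 2))
    (hindep : ∀ i : Fin N, AffineIndependent ℝ ![P (i - 1), P i, P (i + 1)])
    (θ : Fin N → ℝ)
    (hθ : ∀ i : Fin N, θ i = ∠ (P (i - 1)) (P i) (P (i + 1)))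
    (htilt : ∀ i : Fin N, psi (θ i) = psi (θ (i + 1)))
    (hmove : ∀ i : Fin N, ∠ (P i) (P (i - 1)) (P (i + 1)) = ∠ (P i) (P (i + 1)) (P (i - 1))) :
    (∀ i j, dist (P i) (P (i + 1)) = dist (P j) (P (j + 1))) ∧ (∀ i j, θ i = θ j) :=
  alexandrov_polygon_tilting_moving_general N P hindep θ hθ htilt hmove
end

section
/- Let a, b ∈ (0, π). Then the function g(t) := (sin b − sin t)/sin(b + t) + (sin a + sin t)/sin(a − t) is differentiable at t = 0 with g′(0) = (1/sin a + cos a/sin a) − (1/sin b + cos b/sin b) = ψ(a) − ψ(b). -/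
open Real

theorem hasDerivAt_sin_add_sin_div_sin_sub {c : ℝ} (hc : sin c ≠ 0) :
    HasDerivAt (fun t => (sin c + sin t) / sin (c - t)) (psi c) 0 := by
  have hnum : HasDerivAt (fun t => sin c + sin t) (cos 0) 0 :=
    (hasDerivAt_sin 0).const_add (sin c)
  have hden : HasDerivAt (fun t => sin (c - t)) (cos (c - 0) * -1) 0 :=
    (hasDerivAt_sin (c - 0)).comp 0 ((hasDerivAt_id 0).const_sub c)
  refine (hnum.div hden (by simpa using hc)).congr_deriv ?_
  simp only [psi, sub_zero, cos_zero, sin_zero]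
  field_simp
  ring

theorem hasDerivAt_sin_sub_sin_div_sin_add {c : ℝ} (hc : sin c ≠ 0) :
    HasDerivAt (fun t => (sin c - sin t) / sin (c + t)) (-psi c) 0 := by
  have h := ((neg_zero (G := ℝ)).symm ▸ hasDerivAt_sin_add_sin_div_sin_sub hc).scomp 0
    (hasDerivAt_neg' 0)
  simpa [Function.comp_def, sin_neg, sub_eq_add_neg] using h

/-- Calculus core of the tilting stationarity condition: for angles
`a, b ∈ (0, π)`, the function
`g(t) = (sin b − sin t)/sin(b + t) + (sin a + sin t)/sin(a − t)`
is differentiable at `0` with derivative `ψ(a) − ψ(b)`. -/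
theorem tilting_first_variation
    (a b : ℝ) (ha : a ∈ Set.Ioo 0 Real.pi) (hb : b ∈ Set.Ioo 0 Real.pi) :
    HasDerivAt
      (fun t : ℝ =>
        (Real.sin b - Real.sin t) / Real.sin (b + t) +
          (Real.sin a + Real.sin t) / Real.sin (a - t))
      ((1 / Real.sin a + Real.cos a / Real.sin a) -
        (1 / Real.sin b + Real.cos b / Real.sin b)) 0 ∧
    (1 / Real.sin a + Real.cos a / Real.sin a) -
        (1 / Real.sin b + Real.cos b / Real.sin b) = psi a - psi b := by
  have hsa := (sin_pos_of_pos_of_lt_pi ha.1 ha.2).ne'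
  have hsb := (sin_pos_of_pos_of_lt_pi hb.1 hb.2).ne'
  have h := (hasDerivAt_sin_sub_sin_div_sin_add hsb).add (hasDerivAt_sin_add_sin_div_sin_sub hsa)
  exact ⟨h.congr_deriv (neg_add_eq_sub _ _), rfl⟩
end

section
/- Let A, B, C ∈ ℝ² (the Euclidean plane) with A ≠ B, B ≠ C and A ≠ C, and let u := (C − A)/‖C − A‖. Then the function t ↦ dist(A, B + t·u) + dist(B + t·u, C) is differentiable at t = 0 with derivative equal to cos(∠(B, A, C)) − cos(∠(B, C, A)). -/
/-!
The derivative of `t ↦ ‖x + t • v - p‖` at `0` is `⟪x - p, v⟫ / ‖x - p‖`, which for a unit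
vector `v` is the cosine of the angle between `x - p` and `v`. The direction `u` of the
perturbation is that of `C - A` seen from `A`, and the opposite of that of `A - C` seen from `C`,
so the two side lengths contribute `cos ∠ B A C` and `-cos ∠ B C A`.
-/

open EuclideanGeometry InnerProductGeometry

open scoped RealInnerProductSpace

section
variable {V : Type*} [NormedAddCommGroup V] [InnerProductSpace ℝ V]

theorem HasDerivAt.norm {f : ℝ → V} {f' : V} {x : ℝ} (hf : HasDerivAt f f' x) (h0 : f x ≠ 0) :
    HasDerivAt (fun t => ‖f t‖) (⟪f x, f'⟫ / ‖f x‖) x := by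
  have hsq := hf.norm_sq.sqrt (pow_ne_zero 2 (norm_ne_zero_iff.2 h0))
  simp only [Real.sqrt_sq (norm_nonneg _)] at hsq
  convert hsq using 1
  ring

theorem hasDerivAt_dist_add_smul {x p : V} (v : V) (h : x ≠ p) :
    HasDerivAt (fun t : ℝ => dist (x + t • v) p) (⟪x - p, v⟫ / ‖x - p‖) 0 := by
  have hline : HasDerivAt (fun t : ℝ => x + t • v - p) v 0 := by
    simpa using ((hasDerivAt_id (0 : ℝ)).smul_const v).const_add x |>.sub_const p
  simpa [dist_eq_norm] using hline.norm (by simpa using sub_ne_zero.2 h)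

theorem InnerProductGeometry.cos_angle_eq_inner_inv_norm_smul_div_norm (x y : V) :
    Real.cos (angle x y) = ⟪x, ‖y‖⁻¹ • y⟫ / ‖x‖ := by
  rw [cos_angle, real_inner_smul_right]
  ring

end

theorem vertex_moving_first_variation_general
    (A B C : EuclideanSpace ℝ (Fin 2))
    (hAB : A ≠ B) (hBC : B ≠ C) :
    HasDerivAt
      (fun t : ℝ =>
        dist A (B + t • (‖C - A‖⁻¹ • (C - A))) +
          dist (B + t • (‖C - A‖⁻¹ • (C - A))) C)
      (Real.cos (∠ B A C) - Real.cos (∠ B C A)) 0 := by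
  set u := ‖C - A‖⁻¹ • (C - A) with hu
  have hcosA : Real.cos (∠ B A C) = ⟪B - A, u⟫ / ‖B - A‖ :=
    cos_angle_eq_inner_inv_norm_smul_div_norm _ _
  have hcosC : Real.cos (∠ B C A) = -(⟪B - C, u⟫ / ‖B - C‖) := by
    rw [hu, ← neg_sub A C, norm_neg, smul_neg, inner_neg_right, neg_div, neg_neg]
    exact cos_angle_eq_inner_inv_norm_smul_div_norm _ _
  simp_rw [dist_comm A]
  rw [hcosA, hcosC, sub_neg_eq_add]
  exact (hasDerivAt_dist_add_smul u hAB.symm).add (hasDerivAt_dist_add_smul u hBC)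

/-- First variation of the perimeter under the vertex-moving perturbation:
moving `B` in the unit direction `u` of `C − A`, the sum of the two adjacent
side lengths has derivative `cos ∠(B,A,C) − cos ∠(B,C,A)` at `t = 0`. -/
theorem vertex_moving_first_variation
    (A B C : EuclideanSpace ℝ (Fin 2))
    (hAB : A ≠ B) (hBC : B ≠ C) (hAC : A ≠ C) :
    HasDerivAt
      (fun t : ℝ =>
        dist A (B + t • (‖C - A‖⁻¹ • (C - A))) +
          dist (B + t • (‖C - A‖⁻¹ • (C - A))) C)
      (Real.cos (∠ B A C) - Real.cos (∠ B C A)) 0 :=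
  vertex_moving_first_variation_general A B C hAB hBC
end
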